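/- arXiv:1402.5324 — 5 statements merged into one kernel-verified Lean document; each statement's English description precedes it below -/
import Mathlib

section
/- Let U be an isometry of ℓ²(ℕ) with entries u_{i,j}, and define the block coherence μ(R_N U) = sup_{i ≥ N, j ∈ ℕ} |u_{i,j}|². Then the series ∑_{N=1}^∞ μ(R_N U) diverges. -/
open scoped InnerProductSpace

/-- The `(i,j)` matrix entry `U_{ij} = ⟨U e_j, e_i⟩` of an operator on `ℓ²(ℕ)`. -/
noncomputable def entry (U : lp (fun _ : ℕ => ℂ) 2 →ₗᵢ[ℂ] lp (fun _ : ℕ => ℂ) 2)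
    (i j : ℕ) : ℂ :=
  ⟪U (lp.single 2 j 1), lp.single 2 i 1⟫_ℂ

/-- The block coherence `μ(R_N U) = sup_{i ≥ N, j ∈ ℕ} |U_{ij}|²`. -/
noncomputable def muR (U : lp (fun _ : ℕ => ℂ) 2 →ₗᵢ[ℂ] lp (fun _ : ℕ => ℂ) 2)
    (N : ℕ) : ℝ :=
  ⨆ i : {i : ℕ // N ≤ i}, ⨆ j : ℕ, ‖entry U i j‖ ^ 2

/-! If `∑ μ(R_N U)` converged, choose `N` with tail `∑_{n ≥ N} μ(R_n U) < 1/2`. Since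
`|u_{ij}|² ≤ μ(R_i U)`, every column of `U` (a unit vector) keeps more than half of its mass in
the first `N` rows. Summing over `M` columns gives a mass `> M/2` in those `N` rows, while by
Bessel's inequality each row of the isometry `U` has squared norm at most `1`, so `M/2 < N`
for every `M`. -/

open scoped lp

theorem not_summable_of_le_of_hasSum_col_of_sum_row_le {a : ℕ → ℕ → ℝ} {m : ℕ → ℝ} {C : ℝ}
    (ham : ∀ i j, a i j ≤ m i) (hcol : ∀ j, HasSum (fun i => a i j) 1)
    (hrow : ∀ i M, ∑ j ∈ Finset.range M, a i j ≤ C) : ¬ Summable m := by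
  intro hm
  obtain ⟨N, htail⟩ := ((tendsto_sum_nat_add m).eventually
    (gt_mem_nhds (by norm_num : (0 : ℝ) < 1 / 2))).exists
  have hhead : ∀ j, 1 / 2 < ∑ i ∈ Finset.range N, a i j := by
    intro j
    have hsplit := (hcol j).summable.sum_add_tsum_nat_add N
    have htail_le : ∑' k, a (k + N) j ≤ ∑' k, m (k + N) :=
      Summable.tsum_le_tsum (fun k => ham _ j) ((summable_nat_add_iff N).mpr (hcol j).summable)
        ((summable_nat_add_iff N).mpr hm)
    rw [(hcol j).tsum_eq] at hsplit
    linarith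
  obtain ⟨M, hM⟩ := exists_nat_gt (2 * N * C)
  have hlower : (M : ℝ) / 2 ≤ ∑ i ∈ Finset.range N, ∑ j ∈ Finset.range M, a i j := by
    rw [Finset.sum_comm]
    calc (M : ℝ) / 2 = ∑ _j ∈ Finset.range M, (1 / 2 : ℝ) := by simp [div_eq_mul_inv]
      _ ≤ _ := Finset.sum_le_sum fun j _ => (hhead j).le
  have hupper : ∑ i ∈ Finset.range N, ∑ j ∈ Finset.range M, a i j ≤ N * C := by
    simpa using Finset.sum_le_sum fun i (_ : i ∈ Finset.range N) => hrow i M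
  linarith

theorem HilbertBasis.hasSum_norm_inner_sq {𝕜 E ι : Type*} [RCLike 𝕜] [NormedAddCommGroup E]
    [InnerProductSpace 𝕜 E] (b : HilbertBasis ι 𝕜 E) (x : E) :
    HasSum (fun i => ‖⟪x, b i⟫_𝕜‖ ^ 2) (‖x‖ ^ 2) := by
  have h := b.hasSum_inner_mul_inner x x
  simp only [← inner_conj_symm (b _) x, RCLike.mul_conj, inner_self_eq_norm_sq_to_K] at h
  exact_mod_cast h

theorem norm_lp_single_one {𝕜 ι : Type*} [RCLike 𝕜] [DecidableEq ι] (i : ι) :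
    ‖(lp.single 2 i (1 : 𝕜) : ℓ²(ι, 𝕜))‖ = 1 := by
  simp [lp.norm_single]

theorem HilbertBasis.coe_ofRepr_refl {𝕜 ι : Type*} [RCLike 𝕜] [DecidableEq ι] :
    ⇑(HilbertBasis.ofRepr (LinearIsometryEquiv.refl 𝕜 ℓ²(ι, 𝕜))) = fun i => lp.single 2 i 1 :=
  funext fun i => by rw [← HilbertBasis.repr_symm_single]; rfl

theorem orthonormal_lp_single {𝕜 ι : Type*} [RCLike 𝕜] [DecidableEq ι] :
    Orthonormal 𝕜 fun i => (lp.single 2 i 1 : ℓ²(ι, 𝕜)) :=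
  HilbertBasis.coe_ofRepr_refl (𝕜 := 𝕜) (ι := ι) ▸ (HilbertBasis.ofRepr _).orthonormal

section entries

variable (U : ℓ²(ℕ, ℂ) →ₗᵢ[ℂ] ℓ²(ℕ, ℂ))

theorem hasSum_sq_norm_entry_col (j : ℕ) : HasSum (fun i => ‖entry U i j‖ ^ 2) 1 := by
  simpa [entry, HilbertBasis.coe_ofRepr_refl, norm_lp_single_one] using
    (HilbertBasis.ofRepr (LinearIsometryEquiv.refl ℂ ℓ²(ℕ, ℂ))).hasSum_norm_inner_sq
      (U (lp.single 2 j 1))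

theorem sum_sq_norm_entry_row_le (i : ℕ) (s : Finset ℕ) : ∑ j ∈ s, ‖entry U i j‖ ^ 2 ≤ 1 := by
  have hU : Orthonormal ℂ fun j => U (lp.single 2 j 1) :=
    orthonormal_lp_single.comp_linearIsometry U
  simpa [entry, norm_lp_single_one] using hU.sum_inner_products_le (s := s) (lp.single 2 i (1 : ℂ))

theorem sq_norm_entry_le_muR {N i : ℕ} (hNi : N ≤ i) (j : ℕ) : ‖entry U i j‖ ^ 2 ≤ muR U N := by
  have hle_one : ∀ i j, ‖entry U i j‖ ^ 2 ≤ 1 := fun i j => by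
    simpa using sum_sq_norm_entry_row_le U i {j}
  refine (le_ciSup ⟨1, ?_⟩ j).trans
    (le_ciSup (f := fun i : {i // N ≤ i} => ⨆ j, ‖entry U i j‖ ^ 2) ⟨1, ?_⟩ ⟨i, hNi⟩)
  · rintro _ ⟨j, rfl⟩; exact hle_one i j
  · rintro _ ⟨i, rfl⟩; exact ciSup_le (hle_one i)

end entries

/-- For any isometry `U` of `ℓ²(ℕ)`, the series `∑_N μ(R_N U)` diverges. -/
theorem statement0 (U : lp (fun _ : ℕ => ℂ) 2 →ₗᵢ[ℂ] lp (fun _ : ℕ => ℂ) 2) :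
    ¬ Summable (fun N : ℕ => muR U N) :=
  not_summable_of_le_of_hasSum_col_of_sum_row_le (fun _ j => sq_norm_entry_le_muR U le_rfl j)
    (hasSum_sq_norm_entry_col U) (fun i _ => sum_sq_norm_entry_row_le U i _)
end

section
/- Let f, g : ℕ → ℝ be strictly positive decreasing functions with f(N), g(N) ≤ 1 for all N, and suppose ∑_N f(N) diverges. Then there exists an isometry U of ℓ²(ℕ) such that μ(R_N U) ≤ f(N) and μ(U R_N) ≤ g(N) for all N ∈ ℕ. -/
/-! Cut `ℕ` into consecutive blocks `[n_j, n_{j+1})` with `∑_{i ∈ block j} min (f i) (g j) ≥ 1`;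
this is possible because `min f (g j)` is still not summable. Let column `j` of `U` be the unit
vector supported on block `j` whose squared entries are these minima divided by their sum `≥ 1`.
The columns are orthonormal, `|U_ij|² ≤ min (f i) (g j)`, and monotonicity of `f` and `g` turns
this entrywise bound into the two coherence bounds. -/

open scoped InnerProductSpace

/-- The block coherence `μ(U R_N) = sup_{i, j ≥ N} |U_{ij}|²`. -/
noncomputable def muC (U : lp (fun _ : ℕ => ℂ) 2 →ₗᵢ[ℂ] lp (fun _ : ℕ => ℂ) 2)
    (N : ℕ) : ℝ :=
  ⨆ i : ℕ, ⨆ j : {j : ℕ // N ≤ j}, ‖entry U i j‖ ^ 2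

open Finset Filter Function

lemma not_summable_min_const {f : ℕ → ℝ} (hf : ¬Summable f) {c : ℝ} (hc : 0 < c) :
    ¬Summable fun i => min (f i) c := by
  intro hsum
  have hlt : ∀ᶠ i in atTop, min (f i) c < c := hsum.tendsto_atTop_zero.eventually_lt_const hc
  refine hf (hsum.congr_cofinite ?_)
  rw [Nat.cofinite_eq_atTop]
  filter_upwards [hlt] with i hi
  exact min_eq_left (min_lt_iff.1 hi |>.resolve_right (lt_irrefl c)).le

lemma exists_le_sum_Ico_of_not_summable {u : ℕ → ℝ} (hu : ∀ i, 0 ≤ u i) (h : ¬Summable u)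
    (a : ℕ) (C : ℝ) : ∃ m, a ≤ m ∧ C ≤ ∑ i ∈ Ico a m, u i := by
  have htend := (not_summable_iff_tendsto_nat_atTop_of_nonneg fun i => hu (i + a)).1
    ((summable_nat_add_iff a).not.2 h)
  obtain ⟨k, hk⟩ := (htend.eventually_ge_atTop C).exists
  refine ⟨a + k, le_add_right le_rfl, ?_⟩
  simpa [sum_Ico_eq_sum_range, add_comm] using hk

lemma exists_monotone_one_le_sum_Ico {u : ℕ → ℕ → ℝ} (hu : ∀ j i, 0 ≤ u j i)
    (h : ∀ j, ¬Summable (u j)) :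
    ∃ n : ℕ → ℕ, Monotone n ∧ ∀ j, 1 ≤ ∑ i ∈ Ico (n j) (n (j + 1)), u j i := by
  choose next hle hsum using fun j a => exists_le_sum_Ico_of_not_summable (hu j) (h j) a 1
  let n : ℕ → ℕ := fun j => Nat.rec 0 (fun j a => next j a) j
  exact ⟨n, monotone_nat_of_le_succ fun j => hle j (n j), fun j => hsum j (n j)⟩

section Orthonormal

variable {𝕜 E ι κ : Type*} [RCLike 𝕜] [NormedAddCommGroup E] [InnerProductSpace 𝕜 E]
  {e : ι → E}

lemma Orthonormal.inner_sum_smul_left (he : Orthonormal 𝕜 e) (l : ι → 𝕜) (s : Finset ι)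
    (i : ι) [Decidable (i ∈ s)] :
    ⟪(∑ k ∈ s, l k • e k : E), e i⟫_𝕜 = if i ∈ s then (starRingEnd 𝕜) (l i) else 0 := by
  split_ifs with hi
  · exact he.inner_left_sum l hi
  · rw [sum_inner]
    refine sum_eq_zero fun k hk => ?_
    rw [inner_smul_left, he.inner_eq_zero (ne_of_mem_of_not_mem hk hi), mul_zero]

lemma Orthonormal.orthonormal_sum_smul (he : Orthonormal 𝕜 e) {B : κ → Finset ι}
    (hB : Pairwise (Disjoint on B)) {w : κ → ι → 𝕜} (hw : ∀ k, ∑ i ∈ B k, ‖w k i‖ ^ 2 = 1) :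
    Orthonormal 𝕜 fun k => ∑ i ∈ B k, w k i • e i := by
  classical
  rw [orthonormal_iff_ite]
  intro k l
  split_ifs with hkl
  · subst hkl
    simp_rw [he.inner_sum, RCLike.conj_mul]
    exact_mod_cast hw k
  · rw [inner_sum]
    refine sum_eq_zero fun i hi => ?_
    rw [inner_smul_right, he.inner_sum_smul_left,
      if_neg (disjoint_left.1 (hB hkl).symm hi), mul_zero]

end Orthonormal

lemma lp.orthonormal_single {𝕜 ι : Type*} [RCLike 𝕜] [DecidableEq ι] :
    Orthonormal 𝕜 fun i : ι => lp.single (E := fun _ : ι => 𝕜) 2 i 1 := by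
  rw [orthonormal_iff_ite]
  intro i j
  simp [lp.inner_single_left, lp.single_apply, Pi.single_apply]

lemma Orthonormal.exists_linearIsometry_single {𝕜 E ι : Type*} [RCLike 𝕜] [NormedAddCommGroup E]
    [InnerProductSpace 𝕜 E] [CompleteSpace E] [DecidableEq ι] {v : ι → E} (hv : Orthonormal 𝕜 v) :
    ∃ U : lp (fun _ : ι => 𝕜) 2 →ₗᵢ[𝕜] E, ∀ i, U (lp.single 2 i 1) = v i :=
  ⟨hv.orthogonalFamily.linearIsometry, fun i => by simp⟩

theorem exists_linearIsometry_norm_entry_sq_le {m : ℕ → ℕ → ℝ} (hm : ∀ i j, 0 ≤ m i j)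
    {B : ℕ → Finset ℕ} (hB : Pairwise (Disjoint on B)) (hB1 : ∀ j, 1 ≤ ∑ i ∈ B j, m i j) :
    ∃ U : lp (fun _ : ℕ => ℂ) 2 →ₗᵢ[ℂ] lp (fun _ : ℕ => ℂ) 2, ∀ i j, ‖entry U i j‖ ^ 2 ≤ m i j := by
  set S := fun j => ∑ i ∈ B j, m i j
  set w : ℕ → ℕ → ℂ := fun j i => (√(m i j / S j) : ℝ)
  have hS : ∀ j, 0 < S j := fun j => zero_lt_one.trans_le (hB1 j)
  have hw : ∀ j i, ‖w j i‖ ^ 2 = m i j / S j := fun j i => by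
    rw [Complex.norm_real, Real.norm_eq_abs, sq_abs, Real.sq_sqrt (div_nonneg (hm i j) (hS j).le)]
  have hv := lp.orthonormal_single.orthonormal_sum_smul hB (w := w) fun j => by
    rw [sum_congr rfl fun i _ => hw j i, ← sum_div, div_self (hS j).ne']
  obtain ⟨U, hU⟩ := hv.exists_linearIsometry_single
  refine ⟨U, fun i j => ?_⟩
  rw [entry, hU, lp.orthonormal_single.inner_sum_smul_left]
  split_ifs
  · rw [RCLike.norm_conj, hw]
    exact div_le_self (hm i j) (hB1 j)
  · simpa using hm i j

lemma Monotone.pairwise_disjoint_on_finsetIco_succ {n : ℕ → ℕ} (hn : Monotone n) :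
    Pairwise (Disjoint on fun j => Ico (n j) (n (j + 1))) := fun j k hjk => by
  simpa [onFun, ← disjoint_coe] using hn.pairwise_disjoint_on_Ico_succ hjk

section Coherence

variable {U : lp (fun _ : ℕ => ℂ) 2 →ₗᵢ[ℂ] lp (fun _ : ℕ => ℂ) 2} {N : ℕ} {c : ℝ}

lemma muR_le (h : ∀ i, N ≤ i → ∀ j, ‖entry U i j‖ ^ 2 ≤ c) : muR U N ≤ c :=
  have : Nonempty {i : ℕ // N ≤ i} := ⟨⟨N, le_rfl⟩⟩
  ciSup_le fun i => ciSup_le fun j => h i i.2 j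

lemma muC_le (h : ∀ i j, N ≤ j → ‖entry U i j‖ ^ 2 ≤ c) : muC U N ≤ c :=
  have : Nonempty {j : ℕ // N ≤ j} := ⟨⟨N, le_rfl⟩⟩
  ciSup_le fun i => ciSup_le fun j => h i j j.2

end Coherence

theorem statement1_general (f g : ℕ → ℝ) (hfpos : ∀ N, 0 < f N) (hgpos : ∀ N, 0 < g N)
    (hf : Antitone f) (hg : Antitone g)
    (hdiv : ¬ Summable f) :
    ∃ U : lp (fun _ : ℕ => ℂ) 2 →ₗᵢ[ℂ] lp (fun _ : ℕ => ℂ) 2,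
      ∀ N : ℕ, muR U N ≤ f N ∧ muC U N ≤ g N := by
  have hmin : ∀ i j, 0 ≤ min (f i) (g j) := fun i j => le_min (hfpos i).le (hgpos j).le
  obtain ⟨n, hn, hblock⟩ := exists_monotone_one_le_sum_Ico (fun j i => hmin i j)
    fun j => not_summable_min_const hdiv (hgpos j)
  obtain ⟨U, hU⟩ := exists_linearIsometry_norm_entry_sq_le hmin
    hn.pairwise_disjoint_on_finsetIco_succ hblock
  exact ⟨U, fun N =>
    ⟨muR_le fun i hi j => (hU i j).trans ((min_le_left _ _).trans (hf hi)),
      muC_le fun i j hj => (hU i j).trans ((min_le_right _ _).trans (hg hj))⟩⟩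

/-- Given strictly positive decreasing `f, g ≤ 1` with `∑ f` divergent, there is an
isometry `U` of `ℓ²(ℕ)` with `μ(R_N U) ≤ f(N)` and `μ(U R_N) ≤ g(N)` for all `N`. -/
theorem statement1 (f g : ℕ → ℝ) (hfpos : ∀ N, 0 < f N) (hgpos : ∀ N, 0 < g N)
    (hf : Antitone f) (hg : Antitone g)
    (hf1 : ∀ N, f N ≤ 1) (hg1 : ∀ N, g N ≤ 1)
    (hdiv : ¬ Summable f) :
    ∃ U : lp (fun _ : ℕ => ℂ) 2 →ₗᵢ[ℂ] lp (fun _ : ℕ => ℂ) 2,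
      ∀ N : ℕ, muR U N ≤ f N ∧ muC U N ≤ g N :=
  statement1_general f g hfpos hgpos hf hg hdiv
end

section
/- Let (a_{m,f})_{m ∈ ℕ, f ∈ B} be a doubly indexed family of nonnegative reals indexed by ℕ and a countable set B, let ρ₁, ρ₂ : ℕ → B be bijections, and let f : ℕ → ℝ_{>0} be decreasing. Define μ(π_N U_k) = sup_m a_{m, ρ_k(N)} and μ(R_N U_k) = sup_{M ≥ N} μ(π_M U_k) for k = 1, 2. If f(N) ≤ μ(π_N U₁) for all N, then f(N) ≤ μ(R_N U₂) for all N. -/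
/-! Pigeonhole: the injection `ρ₂⁻¹ ∘ ρ₁` cannot send all of `0, …, N` below `N`, so some
`θ ≤ N` has `ρ₁ θ = ρ₂ M` with `M ≥ N`; then `f N ≤ f θ ≤ μ(π_θ U₁) = μ(π_M U₂) ≤ μ(R_N U₂)`. -/

theorem Nat.exists_le_le_apply_of_injective {g : ℕ → ℕ} (hg : Function.Injective g) (N : ℕ) :
    ∃ θ ≤ N, N ≤ g θ := by
  by_contra! hlt
  have hmaps : Set.MapsTo g (Finset.range (N + 1)) (Finset.range N) := fun θ hθ => by
    simpa using hlt θ (Nat.lt_succ_iff.mp (Finset.mem_range.mp hθ))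
  simpa using Finset.card_le_card_of_injOn g hmaps hg.injOn

theorem Antitone.le_iSup_tail_of_le_comp {α : Type*} [CompleteLattice α] {f u v : ℕ → α}
    (hf : Antitone f) {e : ℕ → ℕ} (he : Function.Injective e) (huv : ∀ n, u n = v (e n))
    (hfu : f ≤ u) (N : ℕ) : f N ≤ ⨆ M : {M : ℕ // N ≤ M}, v M := by
  obtain ⟨θ, hθN, hNe⟩ := Nat.exists_le_le_apply_of_injective he N
  calc f N ≤ f θ := hf hθN
    _ ≤ u θ := hfu θ
    _ = v (⟨e θ, hNe⟩ : {M : ℕ // N ≤ M}) := huv θ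
    _ ≤ ⨆ M : {M : ℕ // N ≤ M}, v M := le_iSup (fun M : {M : ℕ // N ≤ M} => v M) _

theorem statement4_general {B : Type*} (a : ℕ → B → ℝ)
    (ρ₁ ρ₂ : ℕ ≃ B) (f : ℕ → ℝ) (hf : Antitone f)
    (h : ∀ N : ℕ, ENNReal.ofReal (f N) ≤ ⨆ m : ℕ, ENNReal.ofReal (a m (ρ₁ N))) :
    ∀ N : ℕ, ENNReal.ofReal (f N) ≤
      ⨆ M : {M : ℕ // N ≤ M}, ⨆ m : ℕ, ENNReal.ofReal (a m (ρ₂ M)) :=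
  (ENNReal.ofReal_mono.comp_antitone hf).le_iSup_tail_of_le_comp
    (v := fun M => ⨆ m : ℕ, ENNReal.ofReal (a m (ρ₂ M))) (ρ₁.trans ρ₂.symm).injective
    (fun n => by simp) h

/-- Abstract reordering lemma: let `a : ℕ → B → ℝ` be a nonnegative doubly indexed family
over `ℕ` and a countable set `B` (here: a type with bijections from `ℕ`), let
`ρ₁ ρ₂ : ℕ ≃ B` be bijections (orderings), and `f : ℕ → ℝ_{>0}` decreasing.  With
`μ(π_N U_k) = sup_m a_{m, ρ_k(N)}` and `μ(R_N U_k) = sup_{M ≥ N} μ(π_M U_k)` (the suprema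
taken in `[0,∞]` via `ENNReal.ofReal` so that they always exist), if `f(N) ≤ μ(π_N U₁)`
for all `N`, then `f(N) ≤ μ(R_N U₂)` for all `N`. -/
theorem statement4 {B : Type*} (a : ℕ → B → ℝ) (ha : ∀ m b, 0 ≤ a m b)
    (ρ₁ ρ₂ : ℕ ≃ B) (f : ℕ → ℝ) (hfpos : ∀ N, 0 < f N) (hf : Antitone f)
    (h : ∀ N : ℕ, ENNReal.ofReal (f N) ≤ ⨆ m : ℕ, ENNReal.ofReal (a m (ρ₁ N))) :
    ∀ N : ℕ, ENNReal.ofReal (f N) ≤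
      ⨆ M : {M : ℕ // N ≤ M}, ⨆ m : ℕ, ENNReal.ofReal (a m (ρ₂ M)) :=
  statement4_general a ρ₁ ρ₂ f hf h
end

section
/- Suppose (v_j)_{j ∈ ℕ} is a sequence of unit vectors in ℓ²(ℕ) that are pairwise orthogonal. Then it cannot happen that there exists N' ∈ ℕ with ∑_{i ≥ N'} |（v_j)_i|² ≤ 1/16 for all j ∈ ℕ. -/
open scoped InnerProductSpace
open Finset

/-!
Project the vectors onto the first `N'` coordinates. These projections lie in the unit ball of a
finite-dimensional space, so by compactness two of them, say those of `v j` and `v j'`, are at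
distance less than `1`. On the other hand `‖v j - v j'‖² = 2` by orthonormality, while the tail of
`v j - v j'` carries at most `2/16 + 2/16 = 1/4` of it; so the projection of `v j - v j'` has
squared norm at least `7/4`, a contradiction.
-/

theorem IsCompact.exists_ne_dist_lt {X : Type*} [PseudoMetricSpace X] {s : Set X}
    (hs : IsCompact s) {u : ℕ → X} (hu : ∀ n, u n ∈ s) {ε : ℝ} (hε : 0 < ε) :
    ∃ m n, m ≠ n ∧ dist (u m) (u n) < ε := by
  obtain ⟨x, -, φ, hφ, hlim⟩ := hs.tendsto_subseq hu
  obtain ⟨M, hM⟩ := Metric.cauchySeq_iff'.mp hlim.cauchySeq ε hε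
  exact ⟨φ (M + 1), φ M, (hφ M.lt_succ_self).ne', hM (M + 1) M.le_succ⟩

theorem tsum_norm_sub_sq_le {ι E : Type*} [SeminormedAddCommGroup E] {f g : ι → E}
    (hf : Summable fun i => ‖f i‖ ^ 2) (hg : Summable fun i => ‖g i‖ ^ 2) :
    ∑' i, ‖f i - g i‖ ^ 2 ≤ 2 * ∑' i, ‖f i‖ ^ 2 + 2 * ∑' i, ‖g i‖ ^ 2 := by
  have hle : ∀ i, ‖f i - g i‖ ^ 2 ≤ 2 * ‖f i‖ ^ 2 + 2 * ‖g i‖ ^ 2 := fun i =>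
    calc ‖f i - g i‖ ^ 2 ≤ (‖f i‖ + ‖g i‖) ^ 2 := by gcongr; exact norm_sub_le _ _
      _ ≤ 2 * ‖f i‖ ^ 2 + 2 * ‖g i‖ ^ 2 := by linarith [add_sq_le (a := ‖f i‖) (b := ‖g i‖)]
  have hsum := (hf.mul_left 2).add (hg.mul_left 2)
  calc ∑' i, ‖f i - g i‖ ^ 2
      ≤ ∑' i, (2 * ‖f i‖ ^ 2 + 2 * ‖g i‖ ^ 2) :=
        (hsum.of_nonneg_of_le (fun _ => by positivity) hle).tsum_le_tsum hle hsum
    _ = 2 * ∑' i, ‖f i‖ ^ 2 + 2 * ∑' i, ‖g i‖ ^ 2 := by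
        rw [(hf.mul_left 2).tsum_add (hg.mul_left 2), tsum_mul_left, tsum_mul_left]

namespace lp

variable {𝕜 : Type*} [RCLike 𝕜]

theorem hasSum_norm_sq {ι : Type*} {E : ι → Type*} [∀ i, NormedAddCommGroup (E i)]
    (f : lp E 2) : HasSum (fun i => ‖f i‖ ^ 2) (‖f‖ ^ 2) := by
  simpa using hasSum_norm (p := 2) (by norm_num) f

theorem sum_range_add_tsum_tail {E : Type*} [NormedAddCommGroup E]
    (f : lp (fun _ : ℕ => E) 2) (N : ℕ) :
    ∑ i ∈ range N, ‖f i‖ ^ 2 + ∑' i : {i : ℕ // N ≤ i}, ‖f i‖ ^ 2 = ‖f‖ ^ 2 := by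
  have htail : ∑' i : {i : ℕ // i ∉ range N}, ‖f i‖ ^ 2 = ∑' i : {i : ℕ // N ≤ i}, ‖f i‖ ^ 2 :=
    Equiv.tsum_eq (Equiv.subtypeEquivRight fun _ => by simp) fun i : {i : ℕ // N ≤ i} => ‖f i‖ ^ 2
  rw [← htail, (hasSum_norm_sq f).summable.sum_add_tsum_subtype_compl, (hasSum_norm_sq f).tsum_eq]

def truncate (N : ℕ) (f : lp (fun _ : ℕ => 𝕜) 2) : EuclideanSpace 𝕜 (Fin N) :=
  WithLp.toLp 2 fun i => f i

theorem truncate_sub (N : ℕ) (f g : lp (fun _ : ℕ => 𝕜) 2) :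
    truncate N (f - g) = truncate N f - truncate N g :=
  rfl

theorem norm_truncate_sq (N : ℕ) (f : lp (fun _ : ℕ => 𝕜) 2) :
    ‖truncate N f‖ ^ 2 = ∑ i ∈ range N, ‖f i‖ ^ 2 := by
  rw [EuclideanSpace.norm_sq_eq, ← Fin.sum_univ_eq_sum_range fun i => ‖f i‖ ^ 2]
  rfl

theorem norm_truncate_le (N : ℕ) (f : lp (fun _ : ℕ => 𝕜) 2) : ‖truncate N f‖ ≤ ‖f‖ := by
  have htail : 0 ≤ ∑' i : {i : ℕ // N ≤ i}, ‖f i‖ ^ 2 := tsum_nonneg fun _ => by positivity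
  have hsplit := sum_range_add_tsum_tail f N
  rw [← norm_truncate_sq] at hsplit
  exact pow_le_pow_iff_left₀ (norm_nonneg _) (norm_nonneg _) two_ne_zero |>.mp (by linarith)

end lp

/-- If `(v_j)` is an orthonormal (pairwise orthogonal, unit norm) sequence in `ℓ²(ℕ)`,
then there is no `N'` such that all the tails satisfy
`∑_{i ≥ N'} |(v_j)_i|² ≤ 1/16`. -/
theorem statement5 (v : ℕ → lp (fun _ : ℕ => ℂ) 2)
    (hnorm : ∀ j, ‖v j‖ = 1)
    (horth : ∀ j j', j ≠ j' → ⟪v j, v j'⟫_ℂ = 0) :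
    ¬ ∃ N' : ℕ, ∀ j : ℕ,
      (∑' i : {i : ℕ // N' ≤ i}, ‖(v j : ∀ i : ℕ, ℂ) (i : ℕ)‖ ^ 2) ≤ 1 / 16 := by
  rintro ⟨N, hN⟩
  have hball : ∀ j, lp.truncate N (v j) ∈ Metric.closedBall 0 1 := fun j => by
    simpa [hnorm j] using lp.norm_truncate_le N (v j)
  obtain ⟨j, j', hne, hclose⟩ := (isCompact_closedBall 0 1).exists_ne_dist_lt hball one_pos
  have hdiff : ‖v j - v j'‖ ^ 2 = 2 := by
    rw [@norm_sub_sq ℂ, horth j j' hne, hnorm, hnorm]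
    norm_num
  have htail : ∑' i : {i : ℕ // N ≤ i}, ‖(v j - v j') i‖ ^ 2 ≤ 1 / 4 := by
    have hsum (k : ℕ) : Summable fun i : {i : ℕ // N ≤ i} => ‖v k i‖ ^ 2 :=
      (lp.hasSum_norm_sq (v k)).summable.subtype {i : ℕ | N ≤ i}
    simp only [lp.coeFn_sub, Pi.sub_apply]
    linarith [tsum_norm_sub_sq_le (hsum j) (hsum j'), hN j, hN j']
  have hsplit := lp.sum_range_add_tsum_tail (v j - v j') N
  rw [← lp.norm_truncate_sq, lp.truncate_sub, ← dist_eq_norm, hdiff] at hsplit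
  nlinarith [dist_nonneg (x := lp.truncate N (v j)) (y := lp.truncate N (v j'))]
end

section
/- Let f, g : ℝ → ℂ be measurable functions and α, C₁, C₂ > 0 constants such that |f(ω)| ≤ C₁ (|ω| + 1)^{-1} and |g(ω)| ≤ C₂ (|ω| + 1)^{-1-α} for all ω ∈ ℝ. Then there is a constant C₃ > 0 such that the convolution satisfies |(f * g)(ω)| ≤ C₃ |ω|^{-1} for all ω ≠ 0. -/
/-!
Put `x = |u| + 1` and `y = |ω - u| + 1`, so that `|ω| ≤ x + y`. Then
`|ω| x⁻¹ y^(-1-α) ≤ y^(-1-α) + x⁻¹ y^(-α)`, and comparing with `min x y` gives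
`x⁻¹ y^(-α) ≤ x^(-1-α) + y^(-1-α)`. Hence `|ω|` times the convolution integrand is dominated,
uniformly in `ω`, by `C₁ C₂ (φ u + 2 φ (ω - u))` with `φ v = (|v| + 1)^(-1-α)` integrable.
-/

open MeasureTheory

namespace Real

variable {α x y : ℝ}

lemma inv_mul_rpow_neg (hx : 0 < x) : x⁻¹ * x ^ (-α) = x ^ (-1 - α) := by
  rw [sub_eq_add_neg, rpow_add hx, rpow_neg_one]

lemma inv_mul_rpow_neg_le_add (hα : 0 ≤ α) (hx : 0 < x) (hy : 0 < y) :
    x⁻¹ * y ^ (-α) ≤ x ^ (-1 - α) + y ^ (-1 - α) := by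
  rcases le_total x y with hxy | hyx
  · calc x⁻¹ * y ^ (-α) ≤ x⁻¹ * x ^ (-α) :=
        mul_le_mul_of_nonneg_left (rpow_le_rpow_of_nonpos hx hxy (neg_nonpos.mpr hα)) (by positivity)
      _ = x ^ (-1 - α) := inv_mul_rpow_neg hx
      _ ≤ x ^ (-1 - α) + y ^ (-1 - α) := le_add_of_nonneg_right (by positivity)
  · calc x⁻¹ * y ^ (-α) ≤ y⁻¹ * y ^ (-α) := by gcongr
      _ = y ^ (-1 - α) := inv_mul_rpow_neg hy
      _ ≤ x ^ (-1 - α) + y ^ (-1 - α) := le_add_of_nonneg_left (by positivity)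

lemma mul_inv_mul_rpow_le {z : ℝ} (hα : 0 ≤ α) (hx : 0 < x) (hy : 0 < y) (hz : z ≤ x + y) :
    z * (x⁻¹ * y ^ (-1 - α)) ≤ x ^ (-1 - α) + 2 * y ^ (-1 - α) := by
  have hsplit : (x + y) * (x⁻¹ * y ^ (-1 - α)) = y ^ (-1 - α) + x⁻¹ * y ^ (-α) := by
    rw [add_mul, ← mul_assoc, mul_inv_cancel₀ hx.ne', one_mul, mul_left_comm,
      mul_comm y, ← rpow_add_one hy.ne', show -1 - α + 1 = -α by ring]
  calc z * (x⁻¹ * y ^ (-1 - α)) ≤ (x + y) * (x⁻¹ * y ^ (-1 - α)) := by gcongr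
    _ = y ^ (-1 - α) + x⁻¹ * y ^ (-α) := hsplit
    _ ≤ y ^ (-1 - α) + (x ^ (-1 - α) + y ^ (-1 - α)) := by
        gcongr; exact inv_mul_rpow_neg_le_add hα hx hy
    _ = x ^ (-1 - α) + 2 * y ^ (-1 - α) := by ring

end Real

lemma integrable_abs_add_one_rpow {α : ℝ} (hα : 0 < α) :
    Integrable fun v : ℝ => (|v| + 1) ^ (-1 - α) := by
  have h := integrable_one_add_norm (E := ℝ) (μ := volume) (r := 1 + α) (by simpa using hα)
  convert h using 3 with v
  · rw [Real.norm_eq_abs, add_comm]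
  · ring

lemma integral_abs_add_one_rpow_pos {α : ℝ} (hα : 0 < α) :
    0 < ∫ v : ℝ, (|v| + 1) ^ (-1 - α) := by
  refine (integral_pos_iff_support_of_nonneg (fun v => by positivity)
    (integrable_abs_add_one_rpow hα)).mpr ?_
  have hsupp : Function.support (fun v : ℝ => (|v| + 1) ^ (-1 - α)) = Set.univ :=
    Set.eq_univ_of_forall fun v => Function.mem_support.mpr (by positivity)
  simp [hsupp]

lemma abs_mul_norm_mul_sub_le {E : Type*} [NonUnitalSeminormedRing E] {f g : ℝ → E}
    {α C₁ C₂ : ℝ} (hα : 0 ≤ α) (hC₁ : 0 ≤ C₁) (hC₂ : 0 ≤ C₂)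
    (hfb : ∀ ω : ℝ, ‖f ω‖ ≤ C₁ * (|ω| + 1)⁻¹)
    (hgb : ∀ ω : ℝ, ‖g ω‖ ≤ C₂ * (|ω| + 1) ^ (-1 - α)) (ω u : ℝ) :
    |ω| * ‖f u * g (ω - u)‖ ≤
      C₁ * C₂ * ((|u| + 1) ^ (-1 - α) + 2 * (|ω - u| + 1) ^ (-1 - α)) := by
  have hω : |ω| ≤ (|u| + 1) + (|ω - u| + 1) := by linarith [abs_sub_abs_le_abs_sub ω u]
  calc |ω| * ‖f u * g (ω - u)‖
      ≤ |ω| * ((C₁ * (|u| + 1)⁻¹) * (C₂ * (|ω - u| + 1) ^ (-1 - α))) := by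
        gcongr
        exact (norm_mul_le _ _).trans
          (mul_le_mul (hfb u) (hgb _) (norm_nonneg _) ((norm_nonneg _).trans (hfb u)))
    _ = C₁ * C₂ * (|ω| * ((|u| + 1)⁻¹ * (|ω - u| + 1) ^ (-1 - α))) := by ring
    _ ≤ C₁ * C₂ * ((|u| + 1) ^ (-1 - α) + 2 * (|ω - u| + 1) ^ (-1 - α)) := by
        gcongr
        exact Real.mul_inv_mul_rpow_le hα (by positivity) (by positivity) hω

theorem statement7_general (f g : ℝ → ℂ)
    (α C₁ C₂ : ℝ) (hα : 0 < α) (hC₁ : 0 < C₁) (hC₂ : 0 < C₂)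
    (hfb : ∀ ω : ℝ, ‖f ω‖ ≤ C₁ * (|ω| + 1)⁻¹)
    (hgb : ∀ ω : ℝ, ‖g ω‖ ≤ C₂ * (|ω| + 1) ^ (-(1 : ℝ) - α)) :
    ∃ C₃ : ℝ, 0 < C₃ ∧ ∀ ω : ℝ, ω ≠ 0 →
      ‖∫ u : ℝ, f u * g (ω - u)‖ ≤ C₃ * |ω|⁻¹ := by
  set φ : ℝ → ℝ := fun v => (|v| + 1) ^ (-1 - α)
  have hφ : Integrable φ := integrable_abs_add_one_rpow hα
  have hJ : 0 < ∫ v, φ v := integral_abs_add_one_rpow_pos hα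
  refine ⟨3 * (C₁ * C₂ * ∫ v, φ v), by positivity, fun ω hω => ?_⟩
  have hω : 0 < |ω| := abs_pos.mpr hω
  have hdom : Integrable fun u => C₁ * C₂ * (φ u + 2 * φ (ω - u)) :=
    (hφ.add ((hφ.comp_sub_left ω).const_mul 2)).const_mul _
  have hbound : ‖∫ u, f u * g (ω - u)‖ ≤ ∫ u, |ω|⁻¹ * (C₁ * C₂ * (φ u + 2 * φ (ω - u))) :=
    norm_integral_le_of_norm_le (hdom.const_mul _) (ae_of_all _ fun u =>
      (le_inv_mul_iff₀ hω).mpr (abs_mul_norm_mul_sub_le hα.le hC₁.le hC₂.le hfb hgb ω u))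
  have hconv : ∫ u, φ (ω - u) = ∫ v, φ v := integral_sub_left_eq_self φ volume ω
  rw [le_mul_inv_iff₀ hω]
  rw [integral_const_mul, integral_const_mul,
    integral_add hφ ((hφ.comp_sub_left ω).const_mul 2), integral_const_mul, hconv] at hbound
  calc ‖∫ u, f u * g (ω - u)‖ * |ω|
      ≤ |ω|⁻¹ * (C₁ * C₂ * ((∫ v, φ v) + 2 * ∫ v, φ v)) * |ω| := by gcongr
    _ = 3 * (C₁ * C₂ * ∫ v, φ v) := by field_simp; ring

/-- Convolution decay: if `|f(ω)| ≤ C₁ (|ω|+1)^{-1}` and `|g(ω)| ≤ C₂ (|ω|+1)^{-1-α}`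
for measurable `f, g : ℝ → ℂ` with `α, C₁, C₂ > 0`, then the convolution
`(f*g)(ω) = ∫ f(u) g(ω-u) du` satisfies `|(f*g)(ω)| ≤ C₃ |ω|^{-1}` for all `ω ≠ 0`. -/
theorem statement7 (f g : ℝ → ℂ) (hf : Measurable f) (hg : Measurable g)
    (α C₁ C₂ : ℝ) (hα : 0 < α) (hC₁ : 0 < C₁) (hC₂ : 0 < C₂)
    (hfb : ∀ ω : ℝ, ‖f ω‖ ≤ C₁ * (|ω| + 1)⁻¹)
    (hgb : ∀ ω : ℝ, ‖g ω‖ ≤ C₂ * (|ω| + 1) ^ (-(1 : ℝ) - α)) :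
    ∃ C₃ : ℝ, 0 < C₃ ∧ ∀ ω : ℝ, ω ≠ 0 →
      ‖∫ u : ℝ, f u * g (ω - u)‖ ≤ C₃ * |ω|⁻¹ :=
  statement7_general f g α C₁ C₂ hα hC₁ hC₂ hfb hgb
end
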